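/- Let $H$ be the tree on vertices $x_1,\ldots,x_6$ with edges $\{x_1,x_2\}, \{x_2,x_3\}, \{x_2,x_4\}, \{x_4,x_5\}, \{x_5,x_6\}$, and let $\mathfrak{c} = (1,1,1,1,1,1)$. Then $\delta_{\mathfrak{c}}(I(H)) = 2$, the monomials $w_1 = x_1x_2x_5x_6$ and $w_2 = x_2x_3x_4x_5$ belong to $\mathcal{W}(\mathfrak{c},H)$, $\deg_{x_6}(w_1) > \deg_{x_6}(w_2)$ and $\deg_{x_3}(w_1) < \deg_{x_3}(w_2)$, but $x_3 w_1/x_6 = x_1x_2x_3x_5 \notin \mathcal{W}(\mathfrak{c},H)$. Hence $H$ does not enjoy the strong exchange property. -/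
import Mathlib


open Finset

/-- A monomial with exponent vector `a` belongs to the `q`-th power of the edge ideal of `G`:
it is divisible by a product of `q` edges of `G`. -/
def memPow {n : ℕ} (G : SimpleGraph (Fin n)) (q : ℕ) (a : Fin n → ℕ) : Prop :=
  ∃ e : Fin q → Fin n × Fin n, (∀ i, G.Adj (e i).1 (e i).2) ∧
    ∀ j, (∑ i, ((if (e i).1 = j then 1 else 0) + (if (e i).2 = j then 1 else 0))) ≤ a j

/-- The exponent vector `a` is componentwise bounded by `c`. -/
def bdd {n : ℕ} (c a : Fin n → ℕ) : Prop := ∀ i, a i ≤ c i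

/-- `δ_c(I(G))`: the largest `q` such that `(I(G)^q)_c ≠ 0`, i.e. such that some
`c`-bounded monomial lies in `I(G)^q`. -/
noncomputable def deltaC {n : ℕ} (G : SimpleGraph (Fin n)) (c : Fin n → ℕ) : ℕ :=
  sSup {q | ∃ a, bdd c a ∧ memPow G q a}

/-- `W(c,G)`: the minimal monomial generators of `(I(G)^{δ_c(I(G))})_c`, i.e. the
`c`-bounded monomials of `I(G)^{δ_c}` that are minimal with respect to divisibility. -/
def genW {n : ℕ} (G : SimpleGraph (Fin n)) (c : Fin n → ℕ) : Set (Fin n → ℕ) :=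
  {a | bdd c a ∧ memPow G (deltaC G c) a ∧
    ∀ b, bdd a b → memPow G (deltaC G c) b → b = a}

/-- The monomial `x_ρ · u / x_ξ`. -/
def exch {n : ℕ} (u : Fin n → ℕ) (ξ ρ : Fin n) : Fin n → ℕ :=
  fun i => if i = ρ then u i + 1 else if i = ξ then u i - 1 else u i

/-- `W(c,G)` enjoys the strong exchange property. -/
def SEPc {n : ℕ} (G : SimpleGraph (Fin n)) (c : Fin n → ℕ) : Prop :=
  ∀ u ∈ genW G c, ∀ v ∈ genW G c, ∀ ξ ρ : Fin n, v ξ < u ξ → u ρ < v ρ →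
    exch u ξ ρ ∈ genW G c

/-- The graph `G` enjoys the strong exchange property: `W(c,G)` does, for every
`c ∈ ℤ_{>0}^n`. -/
def SEP {n : ℕ} (G : SimpleGraph (Fin n)) : Prop :=
  ∀ c : Fin n → ℕ, (∀ i, 0 < c i) → SEPc G c

/-- The cycle graph on `Fin m`. -/
def cycleG (m : ℕ) : SimpleGraph (Fin m) :=
  SimpleGraph.fromRel (fun i j => (i.val + 1) % m = j.val)

/-- The path graph on `Fin m`. -/
def pathG (m : ℕ) : SimpleGraph (Fin m) :=
  SimpleGraph.fromRel (fun i j => i.val + 1 = j.val)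

/-- A set of monomials is of Veronese type: it equals `w · V^{(d)}(a)`, the set of
translates by a fixed monomial `w` of all monomials of degree `d` componentwise
bounded by `a`. -/
def IsVeronese {n : ℕ} (S : Set (Fin n → ℕ)) : Prop :=
  ∃ (w : Fin n → ℕ) (d : ℕ) (a : Fin n → ℕ), d ≤ ∑ i, a i ∧
    S = {u | ∃ v : Fin n → ℕ, (∀ i, v i ≤ a i) ∧ (∑ i, v i) = d ∧
      u = fun i => w i + v i}

/-- The graph on `Fin m` with edges given by a list of (0-based) pairs. -/
def listGraph (m : ℕ) (E : List (ℕ × ℕ)) : SimpleGraph (Fin m) :=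
  SimpleGraph.fromRel (fun i j => (i.val, j.val) ∈ E)

/-- The tree of Lemma `specialsub`: edges `{x₁,x₂},{x₂,x₃},{x₂,x₄},{x₄,x₅},{x₅,x₆}`. -/
def H12 : SimpleGraph (Fin 6) := listGraph 6 [(0,1),(1,2),(1,3),(3,4),(4,5)]

instance : DecidableRel H12.Adj := fun a b =>
  decidable_of_iff _ (SimpleGraph.fromRel_adj _ a b).symm

lemma hub : ∀ x y : Fin 6, H12.Adj x y → (x = 1 ∨ y = 1) ∨ (x = 4 ∨ y = 4) := by decide

lemma adj4 : ∀ x y : Fin 6, H12.Adj x y → (x = 4 ∨ y = 4) →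
    ((x = 3 ∨ y = 3) ∨ (x = 5 ∨ y = 5)) := by decide

lemma term_ge {q : ℕ} (e : Fin q → Fin 6 × Fin 6) (i : Fin q) (v : Fin 6)
    (h : (e i).1 = v ∨ (e i).2 = v) :
    1 ≤ ((if (e i).1 = v then 1 else 0) + (if (e i).2 = v then 1 else 0)) := by
  rcases h with h | h <;> simp [h]

lemma total_cnt {q : ℕ} (e : Fin q → Fin 6 × Fin 6) :
    ∑ j, ∑ i, ((if (e i).1 = j then 1 else 0) + (if (e i).2 = j then 1 else 0)) = 2 * q := by
  rw [Finset.sum_comm]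
  have h : ∀ i : Fin q,
      ∑ j, ((if (e i).1 = j then 1 else 0) + (if (e i).2 = j then 1 else 0)) = 2 := by
    intro i
    rw [Finset.sum_add_distrib]
    simp [Finset.sum_ite_eq]
  simp [h, Finset.sum_const, mul_comm]

lemma mem_sum_le {q : ℕ} {a : Fin 6 → ℕ} (h : memPow H12 q a) : 2 * q ≤ ∑ j, a j := by
  obtain ⟨e, _, hcnt⟩ := h
  calc 2 * q = ∑ j, ∑ i, ((if (e i).1 = j then 1 else 0) + (if (e i).2 = j then 1 else 0)) :=
        (total_cnt e).symm
    _ ≤ ∑ j, a j := Finset.sum_le_sum fun j _ => hcnt j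

lemma memPow2_w1 : memPow H12 2 ![1,1,0,0,1,1] := by
  refine ⟨![((0:Fin 6),(1:Fin 6)), (4,5)], ?_, ?_⟩
  · intro i; fin_cases i <;> decide
  · intro j; fin_cases j <;> simp [Fin.sum_univ_two] <;> try decide

lemma memPow2_w2 : memPow H12 2 ![0,1,1,1,1,0] := by
  refine ⟨![((1:Fin 6),(2:Fin 6)), (3,4)], ?_, ?_⟩
  · intro i; fin_cases i <;> decide
  · intro j; fin_cases j <;> simp [Fin.sum_univ_two] <;> try decide

lemma two_at (v : Fin 6) {e : Fin 3 → Fin 6 × Fin 6} {a : Fin 6 → ℕ}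
    (hcnt : ∀ j, (∑ i, ((if (e i).1 = j then 1 else 0) + (if (e i).2 = j then 1 else 0))) ≤ a j)
    (hav : a v ≤ 1) {i j : Fin 3} (hne : i ≠ j)
    (hi : (e i).1 = v ∨ (e i).2 = v) (hj : (e j).1 = v ∨ (e j).2 = v) : False := by
  have hs : ({i, j} : Finset (Fin 3)).sum
      (fun k => ((if (e k).1 = v then 1 else 0) + (if (e k).2 = v then 1 else 0)))
      ≤ ∑ k, ((if (e k).1 = v then 1 else 0) + (if (e k).2 = v then 1 else 0)) :=
    Finset.sum_le_sum_of_subset (Finset.subset_univ _)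
  rw [Finset.sum_pair hne] at hs
  have ti := term_ge e i v hi
  have tj := term_ge e j v hj
  have hc := hcnt v
  omega

lemma ub : ∀ q ∈ {q | ∃ a, bdd (fun _ : Fin 6 => 1) a ∧ memPow H12 q a}, q ≤ 2 := by
  rintro q ⟨a, hb, hm⟩
  by_contra hq
  push_neg at hq
  have hsum : ∑ j, a j ≤ 6 := by
    calc ∑ j, a j ≤ ∑ _j : Fin 6, 1 := Finset.sum_le_sum fun j _ => hb j
      _ = 6 := by simp
  have h2q : 2 * q ≤ 6 := le_trans (mem_sum_le hm) hsum
  have hq3 : q = 3 := by omega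
  subst hq3
  obtain ⟨e, hadj, hcnt⟩ := hm
  have h0 := hub _ _ (hadj 0)
  have h1 := hub _ _ (hadj 1)
  have h2 := hub _ _ (hadj 2)
  rcases h0 with h0 | h0 <;> rcases h1 with h1 | h1 <;> rcases h2 with h2 | h2 <;>
    first
      | exact two_at 1 hcnt (hb 1) (by decide) h0 h1
      | exact two_at 1 hcnt (hb 1) (by decide) h0 h2
      | exact two_at 1 hcnt (hb 1) (by decide) h1 h2
      | exact two_at 4 hcnt (hb 4) (by decide) h0 h1
      | exact two_at 4 hcnt (hb 4) (by decide) h0 h2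
      | exact two_at 4 hcnt (hb 4) (by decide) h1 h2

lemma nm : ¬ memPow H12 2 ![1,1,1,0,1,0] := by
  rintro ⟨e, hadj, hcnt⟩
  have key : ∀ i : Fin 2, (e i).1 = (1:Fin 6) ∨ (e i).2 = (1:Fin 6) := by
    intro i
    rcases hub _ _ (hadj i) with h | h
    · exact h
    · exfalso
      rcases adj4 _ _ (hadj i) h with h' | h'
      · have ht := term_ge e i 3 h'
        have hs := Finset.single_le_sum
          (f := fun k => ((if (e k).1 = (3:Fin 6) then 1 else 0) + (if (e k).2 = (3:Fin 6) then 1 else 0)))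
          (fun _ _ => Nat.zero_le _) (Finset.mem_univ i)
        have : (1:ℕ) ≤ (![1,1,1,0,1,0] : Fin 6 → ℕ) 3 := le_trans (le_trans ht hs) (hcnt 3)
        exact absurd this (by decide)
      · have ht := term_ge e i 5 h'
        have hs := Finset.single_le_sum
          (f := fun k => ((if (e k).1 = (5:Fin 6) then 1 else 0) + (if (e k).2 = (5:Fin 6) then 1 else 0)))
          (fun _ _ => Nat.zero_le _) (Finset.mem_univ i)
        have : (1:ℕ) ≤ (![1,1,1,0,1,0] : Fin 6 → ℕ) 5 := le_trans (le_trans ht hs) (hcnt 5)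
        exact absurd this (by decide)
  have t0 := term_ge e 0 1 (key 0)
  have t1 := term_ge e 1 1 (key 1)
  have hc := hcnt 1
  rw [Fin.sum_univ_two] at hc
  have ha : (![1,1,1,0,1,0] : Fin 6 → ℕ) 1 = 1 := by decide
  omega

lemma bdd_w1 : bdd (fun _ : Fin 6 => 1) ![1,1,0,0,1,1] := by intro i; fin_cases i <;> decide

lemma bdd_w2 : bdd (fun _ : Fin 6 => 1) ![0,1,1,1,1,0] := by intro i; fin_cases i <;> decide

lemma great : IsGreatest {q | ∃ a, bdd (fun _ : Fin 6 => 1) a ∧ memPow H12 q a} 2 :=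
  ⟨⟨_, bdd_w1, memPow2_w1⟩, ub⟩

lemma hδ : deltaC H12 (fun _ => 1) = 2 := great.csSup_eq

lemma min_gen {w : Fin 6 → ℕ} (hw : ∑ j, w j = 4) :
    ∀ b, bdd w b → memPow H12 2 b → b = w := by
  intro b hb hm
  have hs : 4 ≤ ∑ j, b j := mem_sum_le hm
  have hle : ∑ j, b j ≤ ∑ j, w j := Finset.sum_le_sum fun j _ => hb j
  have heq : ∑ j, b j = ∑ j, w j := by omega
  funext i
  by_contra hne
  have hlt : b i < w i := lt_of_le_of_ne (hb i) hne
  have : ∑ j, b j < ∑ j, w j :=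
    Finset.sum_lt_sum (fun j _ => hb j) ⟨i, Finset.mem_univ i, hlt⟩
  omega

lemma w1_gen : (![1,1,0,0,1,1] : Fin 6 → ℕ) ∈ genW H12 (fun _ => 1) := by
  refine ⟨bdd_w1, ?_, ?_⟩
  · rw [hδ]; exact memPow2_w1
  · intro b hb hm
    rw [hδ] at hm
    exact min_gen (by rw [Fin.sum_univ_six]; decide) b hb hm

lemma w2_gen : (![0,1,1,1,1,0] : Fin 6 → ℕ) ∈ genW H12 (fun _ => 1) := by
  refine ⟨bdd_w2, ?_, ?_⟩
  · rw [hδ]; exact memPow2_w2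
  · intro b hb hm
    rw [hδ] at hm
    exact min_gen (by rw [Fin.sum_univ_six]; decide) b hb hm

lemma exch_eq : exch (![1,1,0,0,1,1] : Fin 6 → ℕ) 5 2 = ![1,1,1,0,1,0] := by
  funext i
  fin_cases i <;> rfl

lemma exch_not_gen : exch (![1,1,0,0,1,1] : Fin 6 → ℕ) 5 2 ∉ genW H12 (fun _ => 1) := by
  rintro ⟨_, hm, _⟩
  rw [hδ, exch_eq] at hm
  exact nm hm

lemma not_sep : ¬ SEP H12 := by
  intro h
  exact exch_not_gen
    (h (fun _ => 1) (fun _ => one_pos) _ w1_gen _ w2_gen 5 2 (by decide) (by decide))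

/-- With `c = (1,…,1)`: `δ_c(I(H)) = 2`, `w₁ = x₁x₂x₅x₆` and
`w₂ = x₂x₃x₄x₅` lie in `W(c,H)`, `deg_{x₆} w₁ > deg_{x₆} w₂`, `deg_{x₃} w₁ < deg_{x₃} w₂`,
but `x₃ w₁ / x₆ = x₁x₂x₃x₅ ∉ W(c,H)`; hence `H` does not enjoy the strong exchange
property. -/
theorem stmt12 :
    IsGreatest {q | ∃ a, bdd (fun _ : Fin 6 => 1) a ∧ memPow H12 q a} 2 ∧
    (![1,1,0,0,1,1] : Fin 6 → ℕ) ∈ genW H12 (fun _ => 1) ∧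
    (![0,1,1,1,1,0] : Fin 6 → ℕ) ∈ genW H12 (fun _ => 1) ∧
    (![0,1,1,1,1,0] : Fin 6 → ℕ) 5 < (![1,1,0,0,1,1] : Fin 6 → ℕ) 5 ∧
    (![1,1,0,0,1,1] : Fin 6 → ℕ) 2 < (![0,1,1,1,1,0] : Fin 6 → ℕ) 2 ∧
    exch (![1,1,0,0,1,1] : Fin 6 → ℕ) 5 2 ∉ genW H12 (fun _ => 1) ∧
    ¬ SEP H12 :=
  ⟨great, w1_gen, w2_gen, by decide, by decide, exch_not_gen, not_sep⟩
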